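/- arXiv:2207.08720 — 3 statements merged into one kernel-verified Lean document; each statement's English description precedes it below -/
import Mathlib

section
/- If X is a locally compact T₀ space, then every Scott-open subset of K(X) (with respect to the Smyth order) is open in the upper Vietoris topology on K(X). -/
open Set Topology TopologicalSpace

universe u v

/-- A subset of a topological space is *saturated* if it equals the intersection of the
open sets containing it. -/
def IsSat {X : Type u} [TopologicalSpace X] (A : Set X) : Prop :=
  A = ⋂₀ {U : Set X | IsOpen U ∧ A ⊆ U}

/-- The saturation `↑a` of a point `a` : the intersection of all open sets containing `a`. -/
def satPt {X : Type u} [TopologicalSpace X] (a : X) : Set X :=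
  ⋂₀ {U : Set X | IsOpen U ∧ a ∈ U}

/-- `KS X` is the collection of all nonempty compact saturated subsets of `X`. -/
def KS (X : Type u) [TopologicalSpace X] : Type u :=
  {K : Set X // K.Nonempty ∧ IsCompact K ∧ IsSat K}

/-- The *Smyth order* on `KS X` : `K ≤ L` iff `L ⊆ K` (reverse inclusion). -/
instance KS.instPartialOrder {X : Type u} [TopologicalSpace X] : PartialOrder (KS X) where
  le K L := L.1 ⊆ K.1
  le_refl K := subset_rfl
  le_trans K L M h₁ h₂ := by intro x hx; exact h₁ (h₂ hx)
  le_antisymm K L h₁ h₂ := by exact Subtype.ext (subset_antisymm h₂ h₁)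

/-- The *upper Vietoris topology* on `KS X`, generated by the sets `□U = {K | K ⊆ U}`
for `U` open in `X`.  The resulting space is the Smyth power space `P_S(X)`. -/
def upperVietoris (X : Type u) [TopologicalSpace X] : TopologicalSpace (KS X) :=
  TopologicalSpace.generateFrom
    {S : Set (KS X) | ∃ U : Set X, IsOpen U ∧ S = {K : KS X | K.1 ⊆ U}}

/-- Scott-open subsets of a preorder: upper sets inaccessible by suprema of
(nonempty) directed sets. -/
def ScottOpen {P : Type u} [Preorder P] (U : Set P) : Prop :=
  IsUpperSet U ∧ ∀ d : Set P, d.Nonempty → DirectedOn (· ≤ ·) d →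
    ∀ a : P, IsLUB d a → a ∈ U → (d ∩ U).Nonempty

/-- The Scott topology of a preorder. -/
def scottTop (P : Type u) [Preorder P] : TopologicalSpace P where
  IsOpen := ScottOpen
  isOpen_univ := ⟨isUpperSet_univ, fun d hd _ _ _ _ => by simpa using hd⟩
  isOpen_inter := by
    rintro U V ⟨hUu, hUd⟩ ⟨hVu, hVd⟩
    refine ⟨hUu.inter hVu, fun d hd hdir a ha haUV => ?_⟩
    obtain ⟨x, hxd, hxU⟩ := hUd d hd hdir a ha haUV.1
    obtain ⟨y, hyd, hyV⟩ := hVd d hd hdir a ha haUV.2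
    obtain ⟨z, hzd, hxz, hyz⟩ := hdir x hxd y hyd
    exact ⟨z, hzd, hUu hxz hxU, hVu hyz hyV⟩
  isOpen_sUnion := by
    intro S hS
    refine ⟨isUpperSet_sUnion fun s hs => (hS s hs).1, fun d hd hdir a ha haU => ?_⟩
    obtain ⟨t, htS, hat⟩ := haU
    obtain ⟨x, hxd, hxt⟩ := (hS t htS).2 d hd hdir a ha hat
    exact ⟨x, hxd, t, htS, hxt⟩

/-- A topological space is *well-filtered* if for every nonempty family of nonempty compact
saturated sets which is filtered under reverse inclusion and every open `U` containing the
intersection of the family, some member of the family is contained in `U`. -/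
def WellFiltered (X : Type u) [TopologicalSpace X] : Prop :=
  ∀ 𝒦 : Set (Set X), 𝒦.Nonempty →
    (∀ K ∈ 𝒦, K.Nonempty ∧ IsCompact K ∧ IsSat K) →
    (∀ K₁ ∈ 𝒦, ∀ K₂ ∈ 𝒦, ∃ K₃ ∈ 𝒦, K₃ ⊆ K₁ ∧ K₃ ⊆ K₂) →
    ∀ U : Set X, IsOpen U → ⋂₀ 𝒦 ⊆ U → ∃ K ∈ 𝒦, K ⊆ U

/-- The specialization order of a topological space: `x ≤ y` iff `x ∈ cl {y}`. -/
def specLE {X : Type u} [TopologicalSpace X] (x y : X) : Prop := x ∈ closure {y}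

/-- Least upper bound with respect to an explicit relation. -/
def RelLUB {P : Type u} (r : P → P → Prop) (d : Set P) (a : P) : Prop :=
  (∀ x ∈ d, r x a) ∧ ∀ b : P, (∀ x ∈ d, r x b) → r a b

/-- Scott openness with respect to an explicit relation. -/
def RelScottOpen {P : Type u} (r : P → P → Prop) (U : Set P) : Prop :=
  (∀ ⦃x y : P⦄, x ∈ U → r x y → y ∈ U) ∧
  ∀ d : Set P, d.Nonempty → DirectedOn r d → ∀ a : P, RelLUB r d a → a ∈ U → (d ∩ U).Nonempty

/-- A `d`-space (monotone convergence space): the specialization order is directed complete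
and every open set is Scott open with respect to the specialization order. -/
def DSpace (X : Type u) [TopologicalSpace X] : Prop :=
  (∀ d : Set X, d.Nonempty → DirectedOn specLE d → ∃ a : X, RelLUB specLE d a) ∧
  ∀ U : Set X, IsOpen U → RelScottOpen specLE U

/-- A space is *sober* if every irreducible closed set is the closure of a unique point. -/
def SoberSp (Z : Type u) [TopologicalSpace Z] : Prop :=
  ∀ A : Set Z, IsClosed A → IsIrreducible A → ∃! z : Z, A = closure {z}

/-- A closed set `A` is a *Rudin set* if there is a (nonempty) family of nonempty compact
saturated sets, filtered under reverse inclusion, such that `A` is a minimal closed set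
meeting every member of the family. -/
def RudinSet {X : Type u} [TopologicalSpace X] (A : Set X) : Prop :=
  IsClosed A ∧
  ∃ 𝒦 : Set (Set X), 𝒦.Nonempty ∧
    (∀ K ∈ 𝒦, K.Nonempty ∧ IsCompact K ∧ IsSat K) ∧
    (∀ K₁ ∈ 𝒦, ∀ K₂ ∈ 𝒦, ∃ K₃ ∈ 𝒦, K₃ ⊆ K₁ ∧ K₃ ⊆ K₂) ∧
    (∀ K ∈ 𝒦, (A ∩ K).Nonempty) ∧
    (∀ B : Set X, IsClosed B → (∀ K ∈ 𝒦, (B ∩ K).Nonempty) → B ⊆ A → B = A)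

/-- A *Rudin space*: every irreducible closed subset is a Rudin set. -/
def RudinSpace (X : Type u) [TopologicalSpace X] : Prop :=
  ∀ A : Set X, IsClosed A → IsIrreducible A → RudinSet A

/-- A closed set `A` is *well-filtered determined* (WD) if every continuous map into a
well-filtered T₀ space sends it to a set whose closure is a point closure. -/
def WDSet {X : Type u} [TopologicalSpace X] (A : Set X) : Prop :=
  ∀ (Y : Type v) [TopologicalSpace Y] [T0Space Y], WellFiltered Y →
    ∀ f : X → Y, Continuous f → ∃ y : Y, closure (f '' A) = closure {y}

/-- A *well-filtered determined (WD) space*: every irreducible closed subset is WD. -/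
def WDSpace (X : Type u) [TopologicalSpace X] : Prop :=
  ∀ A : Set X, IsClosed A → IsIrreducible A → WDSet.{u, v} A

/-- Property S: for every irreducible closed set `A`, the family `{↑a : a ∈ A}` is an
irreducible subset of the Scott power space `Σ K(X)`, or
`◇A = {K ∈ K(X) : K ∩ A ≠ ∅}` is an irreducible closed subset of `Σ K(X)`. -/
def PropertyS (X : Type u) [TopologicalSpace X] : Prop :=
  ∀ A : Set X, IsClosed A → IsIrreducible A →
    @IsIrreducible (KS X) (scottTop (KS X)) {K : KS X | ∃ a ∈ A, K.1 = satPt a} ∨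
    (@IsClosed (KS X) (scottTop (KS X)) {K : KS X | (K.1 ∩ A).Nonempty} ∧
      @IsIrreducible (KS X) (scottTop (KS X)) {K : KS X | (K.1 ∩ A).Nonempty})

/-- The order of Jia's dcpo on `ℕ × ℕ × (ℕ ∪ {∞})`:
`(i₁,j₁,k₁) ≤ (i₂,j₂,k₂)` iff (`i₁ = i₂`, `j₁ = j₂` and `k₁ ≤ k₂`) or
(`i₂ = i₁ + 1`, `k₁ ≤ j₂` and `k₂ = ∞`). -/
def LJiaLE (a b : ℕ × ℕ × WithTop ℕ) : Prop :=
  (a.1 = b.1 ∧ a.2.1 = b.2.1 ∧ a.2.2 ≤ b.2.2) ∨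
  (b.1 = a.1 + 1 ∧ a.2.2 ≤ (b.2.1 : WithTop ℕ) ∧ b.2.2 = ⊤)

/-!
In a locally compact space every `K ∈ K(X)` is the directed Smyth-supremum of the compact
saturated `L` with `K ⊆ int L`. Hence a Scott-open `U ∋ K` contains such an `L`, and then
`□(int L)` is an upper Vietoris neighbourhood of `K` contained in `U`.
-/

section Saturation

variable {X : Type u} [TopologicalSpace X]

def saturation (Q : Set X) : Set X :=
  ⋂₀ {V : Set X | IsOpen V ∧ Q ⊆ V}

lemma subset_saturation (Q : Set X) : Q ⊆ saturation Q :=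
  fun _ hx _ hV => hV.2 hx

lemma saturation_subset {Q V : Set X} (hV : IsOpen V) (h : Q ⊆ V) : saturation Q ⊆ V :=
  fun _ hx => hx V ⟨hV, h⟩

lemma IsCompact.saturation {Q : Set X} (hQ : IsCompact Q) : IsCompact (saturation Q) := by
  refine isCompact_of_finite_subcover fun W hWo hcov => ?_
  obtain ⟨t, ht⟩ := hQ.elim_finite_subcover W hWo ((subset_saturation Q).trans hcov)
  exact ⟨t, saturation_subset (isOpen_biUnion fun i _ => hWo i) ht⟩

lemma isSat_saturation (Q : Set X) : IsSat (saturation Q) :=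
  subset_antisymm (subset_saturation _)
    (fun _ hx V hV => hx V ⟨hV.1, saturation_subset hV.1 hV.2⟩)

end Saturation

namespace KS

variable {X : Type u} [TopologicalSpace X]

lemma le_iff_subset {K L : KS X} : K ≤ L ↔ L.1 ⊆ K.1 := Iff.rfl

lemma isOpen_upperVietoris_box {V : Set X} (hV : IsOpen V) :
    IsOpen[upperVietoris X] {K : KS X | K.1 ⊆ V} :=
  GenerateOpen.basic _ ⟨V, hV, rfl⟩

lemma exists_subset_interior_subset [LocallyCompactSpace X] (K : KS X) {V : Set X}
    (hV : IsOpen V) (hKV : K.1 ⊆ V) : ∃ L : KS X, K.1 ⊆ interior L.1 ∧ L.1 ⊆ V := by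
  obtain ⟨Q, hQc, hKQ, hQV⟩ := exists_compact_between K.2.2.1 hV hKV
  refine ⟨⟨saturation Q, K.2.1.mono (hKQ.trans interior_subset |>.trans (subset_saturation Q)),
    hQc.saturation, isSat_saturation Q⟩, ?_, saturation_subset hV hQV⟩
  exact hKQ.trans (interior_mono (subset_saturation Q))

/-- In the Smyth order these are way below `K`. -/
def nhdsSet (K : KS X) : Set (KS X) :=
  {L : KS X | K.1 ⊆ interior L.1}

lemma nhdsSet_nonempty [LocallyCompactSpace X] (K : KS X) : (nhdsSet K).Nonempty :=
  let ⟨L, hKL, _⟩ := exists_subset_interior_subset K isOpen_univ (subset_univ _)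
  ⟨L, hKL⟩

lemma directedOn_nhdsSet [LocallyCompactSpace X] (K : KS X) :
    DirectedOn (· ≤ ·) (nhdsSet K) := by
  intro L₁ h₁ L₂ h₂
  obtain ⟨L, hKL, hL⟩ := exists_subset_interior_subset K
    (isOpen_interior.inter isOpen_interior) (subset_inter h₁ h₂)
  exact ⟨L, hKL, hL.trans (inter_subset_left.trans interior_subset),
    hL.trans (inter_subset_right.trans interior_subset)⟩

/-- Since `K` is saturated it is the intersection of its open neighbourhoods, each of which
contains a member of `nhdsSet K`. -/
lemma isLUB_nhdsSet [LocallyCompactSpace X] (K : KS X) : IsLUB (nhdsSet K) K := by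
  refine ⟨fun L hL => le_iff_subset.2 (hL.trans interior_subset), fun M hM => ?_⟩
  refine le_iff_subset.2 fun x hx => ?_
  rw [K.2.2.2]
  intro V hV
  obtain ⟨L, hKL, hLV⟩ := exists_subset_interior_subset K hV.1 hV.2
  exact hLV (le_iff_subset.1 (hM hKL) hx)

lemma _root_.ScottOpen.exists_subset_interior [LocallyCompactSpace X] {U : Set (KS X)}
    (hU : ScottOpen U) {K : KS X} (hK : K ∈ U) : ∃ L ∈ U, K.1 ⊆ interior L.1 :=
  let ⟨L, hKL, hLU⟩ := hU.2 _ (nhdsSet_nonempty K) (directedOn_nhdsSet K) K (isLUB_nhdsSet K) hK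
  ⟨L, hLU, hKL⟩

end KS

theorem stmt2_general {X : Type u} [TopologicalSpace X] [LocallyCompactSpace X]
    (U : Set (KS X)) (hU : ScottOpen U) :
    @IsOpen (KS X) (upperVietoris X) U := by
  let := upperVietoris X
  refine isOpen_iff_forall_mem_open.2 fun K hK => ?_
  obtain ⟨L, hLU, hKL⟩ := hU.exists_subset_interior hK
  exact ⟨{M : KS X | M.1 ⊆ interior L.1},
    fun M hM => hU.1 (KS.le_iff_subset.2 (hM.trans interior_subset)) hLU,
    KS.isOpen_upperVietoris_box isOpen_interior, hKL⟩

/-- If `X` is a locally compact `T₀` space, then every Scott-open subset of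
`K(X)` (with respect to the Smyth order) is open in the upper Vietoris topology. -/
theorem stmt2 {X : Type u} [TopologicalSpace X] [T0Space X] [LocallyCompactSpace X]
    (U : Set (KS X)) (hU : ScottOpen U) :
    @IsOpen (KS X) (upperVietoris X) U :=
  stmt2_general U hU
end

section
/- If X is a well-filtered T₀ space, then the Scott power space Σ K(X) (the set K(X) of nonempty compact saturated subsets of X, with the Scott topology of the Smyth order) is itself a well-filtered space. -/
open Set Topology TopologicalSpace

universe u v

/-!
Suppose a filtered family `𝒦` of compact saturated subsets of `Σ K(X)` has its intersection
inside a Scott-open set `𝒰`, but no member inside `𝒰`. By Zorn's lemma and compactness there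
is a closed set `𝒞 ⊆ 𝒰ᶜ` that is minimal among the closed sets meeting every `𝒬 ∈ 𝒦`.
Well-filteredness of `X` makes the boxes `{K | K ⊆ U}` Scott open, so each union `⋃ (𝒞 ∩ 𝒬)`
is again compact saturated in `X`; these unions form a directed family in `K(X)` whose
supremum `L`, their intersection, lies in the Scott-closed set `𝒞`. Testing minimality of `𝒞`
against the Scott-closed sets `{K | x ∈ K}` shows that every member of `𝒞` is below `L`, so `L`
lies in every (upper) `𝒬`, hence in `⋂ 𝒦 ⊆ 𝒰`: a contradiction.
-/

lemma isCompact_of_directed_cover {X : Type u} [TopologicalSpace X] {s : Set X}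
    (h : ∀ {ι : Type u} [Nonempty ι] (U : ι → Set X), (∀ i, IsOpen (U i)) → s ⊆ ⋃ i, U i →
      Directed (· ⊆ ·) U → ∃ i, s ⊆ U i) :
    IsCompact s :=
  isCompact_of_finite_subcover fun U hU hsU =>
    h (fun t : Finset _ => ⋃ i ∈ t, U i) (fun _ => isOpen_biUnion fun i _ => hU i)
      (iUnion_eq_iUnion_finset U ▸ hsU)
      (directed_of_isDirected_le fun _ _ h => biUnion_subset_biUnion_left h)

def closedMeeting {Y : Type*} [TopologicalSpace Y] (𝒦 : Set (Set Y)) : Set (Set Y) :=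
  {B | IsClosed B ∧ ∀ Q ∈ 𝒦, (B ∩ Q).Nonempty}

lemma exists_minimal_closedMeeting {Y : Type*} [TopologicalSpace Y] {𝒦 : Set (Set Y)}
    (hcomp : ∀ Q ∈ 𝒦, IsCompact Q) {A : Set Y} (hA : A ∈ closedMeeting 𝒦) :
    ∃ C ⊆ A, Minimal (· ∈ closedMeeting 𝒦) C := by
  refine zorn_superset_nonempty _ (fun c hcS hc ⟨B₀, hB₀⟩ => ⟨⋂₀ c,
    ⟨isClosed_sInter fun B hB => (hcS hB).1, fun Q hQ => ?_⟩,
    fun B hB => sInter_subset_of_mem hB⟩) A hA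
  have : Nonempty c := ⟨⟨B₀, hB₀⟩⟩
  by_contra hdisj
  obtain ⟨B, hB⟩ := (hcomp Q hQ).elim_directed_family_closed (fun B : c => B.1)
    (fun B => (hcS B.2).1)
    (by rwa [← sInter_eq_iInter, inter_comm, ← not_nonempty_iff_eq_empty])
    fun B B' => (hc.total B.2 B'.2).elim
      (fun h => ⟨B, subset_rfl, h⟩) fun h => ⟨B', h, subset_rfl⟩
  exact ((hcS B.2).2 Q hQ).ne_empty (by rwa [inter_comm])

section Saturated

variable {X : Type u} [TopologicalSpace X] {A : Set X}

lemma isSat_iff_forall_specializes : IsSat A ↔ ∀ ⦃x y : X⦄, x ⤳ y → y ∈ A → x ∈ A := by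
  rw [IsSat, ← nhdsKer_def, eq_comm, Subset.antisymm_iff,
    and_iff_left subset_nhdsKer]
  simp only [subset_def, mem_nhdsKer_iff_specializes]
  exact ⟨fun h x y hxy hy => h x ⟨y, hy, hxy⟩, fun h x ⟨y, hy, hxy⟩ => h hxy hy⟩

lemma isSat_biInter {ι : Type*} {s : Set ι} {t : ι → Set X} (h : ∀ i ∈ s, IsSat (t i)) :
    IsSat (⋂ i ∈ s, t i) :=
  isSat_iff_forall_specializes.2 fun _ _ hxy hy => mem_iInter₂.2 fun i hi =>
    isSat_iff_forall_specializes.1 (h i hi) hxy (mem_iInter₂.1 hy i hi)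

lemma isSat_biUnion {ι : Type*} {s : Set ι} {t : ι → Set X} (h : ∀ i ∈ s, IsSat (t i)) :
    IsSat (⋃ i ∈ s, t i) :=
  isSat_iff_forall_specializes.2 fun _ _ hxy hy =>
    let ⟨i, hi, hyi⟩ := mem_iUnion₂.1 hy
    mem_iUnion₂.2 ⟨i, hi, isSat_iff_forall_specializes.1 (h i hi) hxy hyi⟩

lemma IsSat.exists_isOpen_notMem (hA : IsSat A) {x : X} (hx : x ∉ A) :
    ∃ U, IsOpen U ∧ A ⊆ U ∧ x ∉ U := by
  rw [hA, mem_sInter] at hx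
  push Not at hx
  obtain ⟨U, ⟨hU, hAU⟩, hxU⟩ := hx
  exact ⟨U, hU, hAU, hxU⟩

lemma IsSat.isUpperSet {P : Type*} [Preorder P] [TopologicalSpace P] {D : Set (Set P)}
    [Topology.IsScott P D] {A : Set P} (hA : IsSat A) : IsUpperSet A := by
  rw [hA]
  exact isUpperSet_sInter fun U hU => Topology.IsScott.isUpperSet_of_isOpen (D := D) hU.1

end Saturated

instance isScott_scottTop {P : Type u} [Preorder P] :
    @Topology.IsScott P univ _ (scottTop P) :=
  @Topology.IsScott.mk P univ _ (scottTop P) <| TopologicalSpace.ext <| funext fun s =>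
    propext <| by
      rw [@Topology.IsScott.isOpen_iff_isUpperSet_and_dirSupInaccOn P univ _ (scott P univ) s
        (@Topology.IsScott.mk P univ _ (scott P univ) rfl), dirSupInaccOn_univ]
      rfl

attribute [local instance] scottTop

section SmythPowerSpace

variable {X : Type u} [TopologicalSpace X]

lemma WellFiltered.exists_subset_of_directedOn (hwf : WellFiltered X) {d : Set (KS X)}
    (hne : d.Nonempty) (hdir : DirectedOn (· ≤ ·) d) {U : Set X} (hU : IsOpen U)
    (hdU : ⋂ K ∈ d, K.1 ⊆ U) : ∃ K ∈ d, K.1 ⊆ U := by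
  obtain ⟨_, ⟨K, hK, rfl⟩, hKU⟩ := hwf (Subtype.val '' d) (hne.image _)
    (by rintro _ ⟨K, -, rfl⟩; exact K.2)
    (by
      rintro _ ⟨K₁, h₁, rfl⟩ _ ⟨K₂, h₂, rfl⟩
      obtain ⟨K₃, h₃, h₁₃, h₂₃⟩ := hdir K₁ h₁ K₂ h₂
      exact ⟨K₃.1, mem_image_of_mem _ h₃, h₁₃, h₂₃⟩)
    U hU fun x hx => hdU (mem_iInter₂.2 fun K hK => hx _ ⟨K, hK, rfl⟩)
  exact ⟨K, hK, hKU⟩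

lemma WellFiltered.biInter_nonempty (hwf : WellFiltered X) {d : Set (KS X)}
    (hne : d.Nonempty) (hdir : DirectedOn (· ≤ ·) d) : (⋂ K ∈ d, K.1).Nonempty := by
  by_contra h
  obtain ⟨K, -, hK⟩ := hwf.exists_subset_of_directedOn hne hdir isOpen_empty
    (not_nonempty_iff_eq_empty.1 h).subset
  exact K.2.1.ne_empty (subset_empty_iff.1 hK)

lemma WellFiltered.isCompact_biInter (hwf : WellFiltered X) {d : Set (KS X)}
    (hne : d.Nonempty) (hdir : DirectedOn (· ≤ ·) d) : IsCompact (⋂ K ∈ d, K.1) :=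
  isCompact_of_directed_cover fun U hU hcover hUdir => by
    obtain ⟨K, hK, hKU⟩ := hwf.exists_subset_of_directedOn hne hdir (isOpen_iUnion hU) hcover
    obtain ⟨i, hi⟩ := K.2.2.1.elim_directed_cover U hU hKU hUdir
    exact ⟨i, (biInter_subset_of_mem hK).trans hi⟩

namespace KS

def sInter (hwf : WellFiltered X) {d : Set (KS X)} (hne : d.Nonempty)
    (hdir : DirectedOn (· ≤ ·) d) : KS X :=
  ⟨⋂ K ∈ d, K.1, hwf.biInter_nonempty hne hdir, hwf.isCompact_biInter hne hdir,
    isSat_biInter fun K _ => K.2.2.2⟩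

lemma isLUB_sInter (hwf : WellFiltered X) {d : Set (KS X)} (hne : d.Nonempty)
    (hdir : DirectedOn (· ≤ ·) d) : IsLUB d (sInter hwf hne hdir) :=
  ⟨fun _ hK => biInter_subset_of_mem hK, fun _ hL => subset_iInter₂ fun _ hK => hL hK⟩

lemma isOpen_setOf_subset (hwf : WellFiltered X) {U : Set X} (hU : IsOpen U) :
    IsOpen {K : KS X | K.1 ⊆ U} := by
  refine ⟨fun K L hKL hK => Subset.trans hKL hK, fun d hne hdir a ha haU => ?_⟩
  obtain ⟨K, hK, hKU⟩ := hwf.exists_subset_of_directedOn hne hdir hU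
    (Subset.trans (ha.2 (isLUB_sInter hwf hne hdir).1) haU)
  exact ⟨K, hK, hKU⟩

lemma isClosed_setOf_mem (hwf : WellFiltered X) (x : X) : IsClosed {K : KS X | x ∈ K.1} := by
  rw [← isOpen_compl_iff, isOpen_iff_forall_mem_open]
  intro K hxK
  obtain ⟨U, hU, hKU, hxU⟩ := K.2.2.2.exists_isOpen_notMem hxK
  exact ⟨{L | L.1 ⊆ U}, fun L hLU hxL => hxU (hLU hxL), isOpen_setOf_subset hwf hU, hKU⟩

lemma isCompact_biUnion (hwf : WellFiltered X) {S : Set (KS X)} (hS : IsCompact S) :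
    IsCompact (⋃ K ∈ S, K.1) :=
  isCompact_of_directed_cover fun U hU hcover hUdir => by
    have hboxes : S ⊆ ⋃ i, {K : KS X | K.1 ⊆ U i} := fun K hK => mem_iUnion.2 <|
      K.2.2.1.elim_directed_cover U hU ((subset_biUnion_of_mem hK).trans hcover) hUdir
    obtain ⟨i, hi⟩ := hS.elim_directed_cover _ (fun i => isOpen_setOf_subset hwf (hU i)) hboxes
      fun i j =>
        let ⟨k, hik, hjk⟩ := hUdir i j
        ⟨k, fun _ hK => hK.trans hik, fun _ hK => hK.trans hjk⟩
    exact ⟨i, iUnion₂_subset fun _ hK => hi hK⟩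

def sUnion (hwf : WellFiltered X) {S : Set (KS X)} (hne : S.Nonempty) (hS : IsCompact S) :
    KS X :=
  ⟨⋃ K ∈ S, K.1, hne.elim fun K hK => K.2.1.mono (subset_biUnion_of_mem hK),
    isCompact_biUnion hwf hS, isSat_biUnion fun K _ => K.2.2.2⟩

lemma sUnion_le {hwf : WellFiltered X} {S : Set (KS X)} {hne : S.Nonempty} {hS : IsCompact S}
    {K : KS X} (hK : K ∈ S) : sUnion hwf hne hS ≤ K :=
  subset_biUnion_of_mem (u := fun K : KS X => K.1) hK

lemma sUnion_anti {hwf : WellFiltered X} {S T : Set (KS X)} {hS : S.Nonempty}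
    {hS' : IsCompact S} {hT : T.Nonempty} {hT' : IsCompact T} (hST : S ⊆ T) :
    sUnion hwf hT hT' ≤ sUnion hwf hS hS' :=
  biUnion_subset_biUnion_left hST

end KS

lemma le_of_minimal_closedMeeting (hwf : WellFiltered X) {𝒦 : Set (Set (KS X))}
    {C : Set (KS X)} (hC : Minimal (· ∈ closedMeeting 𝒦) C) {L : KS X}
    (hL : ∀ Q ∈ 𝒦, L.1 ⊆ ⋃ K ∈ C ∩ Q, K.1) {K : KS X} (hK : K ∈ C) : K ≤ L := by
  intro x hx
  have hCx : C ∩ {K | x ∈ K.1} ∈ closedMeeting 𝒦 := by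
    refine ⟨hC.prop.1.inter (KS.isClosed_setOf_mem hwf x), fun Q hQ => ?_⟩
    obtain ⟨K', hK', hxK'⟩ := mem_iUnion₂.1 (hL Q hQ hx)
    exact ⟨K', ⟨hK'.1, hxK'⟩, hK'.2⟩
  exact (hC.le_of_le hCx inter_subset_left hK).2

lemma nonempty_inter_sInter_of_minimal_closedMeeting (hwf : WellFiltered X)
    {𝒦 : Set (Set (KS X))} (h𝒦ne : 𝒦.Nonempty) (hcomp : ∀ Q ∈ 𝒦, IsCompact Q)
    (hsat : ∀ Q ∈ 𝒦, IsSat Q) (hdir : DirectedOn (· ⊇ ·) 𝒦) {C : Set (KS X)}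
    (hC : Minimal (· ∈ closedMeeting 𝒦) C) : (C ∩ ⋂₀ 𝒦).Nonempty := by
  obtain ⟨hCcl, hCmeet⟩ := hC.prop
  have : Nonempty 𝒦 := h𝒦ne.to_subtype
  let E : 𝒦 → KS X := fun Q =>
    KS.sUnion hwf (hCmeet Q Q.2) ((hcomp Q Q.2).inter_left hCcl)
  have hEC : range E ⊆ C := by
    rintro _ ⟨Q, rfl⟩
    obtain ⟨K, hK⟩ := hCmeet Q Q.2
    exact Topology.IsScott.isLowerSet_of_isClosed hCcl (KS.sUnion_le hK) hK.1
  have hEdir : DirectedOn (· ≤ ·) (range E) := directedOn_range.2 fun Q₁ Q₂ => by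
    obtain ⟨Q₃, h₃, h₁₃, h₂₃⟩ := hdir Q₁ Q₁.2 Q₂ Q₂.2
    exact ⟨⟨Q₃, h₃⟩, KS.sUnion_anti (inter_subset_inter_right C h₁₃),
      KS.sUnion_anti (inter_subset_inter_right C h₂₃)⟩
  let L := KS.sInter hwf (range_nonempty E) hEdir
  have hLC : L ∈ C := Topology.IsScott.dirSupClosed_of_isClosed hCcl hEC (range_nonempty E)
    hEdir (KS.isLUB_sInter hwf _ hEdir)
  have hCL : ∀ K ∈ C, K ≤ L := fun K hK => le_of_minimal_closedMeeting hwf hC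
    (fun Q hQ => biInter_subset_of_mem (mem_range_self (f := E) ⟨Q, hQ⟩)) hK
  refine ⟨L, hLC, fun Q hQ => ?_⟩
  obtain ⟨K, hKC, hKQ⟩ := hCmeet Q hQ
  exact (hsat Q hQ).isUpperSet (D := univ) (hCL K hKC) hKQ

end SmythPowerSpace

theorem stmt4_general {X : Type u} [TopologicalSpace X] (hwf : WellFiltered X) :
    @WellFiltered (KS X) (scottTop (KS X)) := by
  intro 𝒦 h𝒦ne hmem hdir 𝒰 h𝒰 hsub
  by_contra! hcon
  have hmeet : 𝒰ᶜ ∈ closedMeeting 𝒦 := ⟨h𝒰.isClosed_compl, fun Q hQ =>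
    let ⟨K, hKQ, hKU⟩ := not_subset.1 (hcon Q hQ)
    ⟨K, hKU, hKQ⟩⟩
  obtain ⟨C, hCU, hC⟩ := exists_minimal_closedMeeting (fun Q hQ => (hmem Q hQ).2.1) hmeet
  obtain ⟨L, hLC, hL𝒦⟩ := nonempty_inter_sInter_of_minimal_closedMeeting hwf h𝒦ne
    (fun Q hQ => (hmem Q hQ).2.1) (fun Q hQ => (hmem Q hQ).2.2) hdir hC
  exact hCU hLC (hsub hL𝒦)

/-- If `X` is a well-filtered `T₀` space, then the Scott power space
`Σ K(X)` (that is, `K(X)` with the Scott topology of the Smyth order) is well-filtered. -/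
theorem stmt4 {X : Type u} [TopologicalSpace X] [T0Space X] (hwf : WellFiltered X) :
    @WellFiltered (KS X) (scottTop (KS X)) :=
  stmt4_general hwf
end

section
/- Let X be a countably infinite set equipped with the cofinite topology (closed sets: finite sets and X). Then: (1) the nonempty compact saturated subsets of X are exactly the nonempty subsets of X, i.e. K(X) = 2^X \ {∅}; (2) the Scott topology of the Smyth order on K(X) coincides with the upper Vietoris topology; (3) K(X) with the Smyth order is not a dcpo, and consequently X is not well-filtered. -/
open Set Topology TopologicalSpace

universe u v

/-!
A cofinite space is T₁ and Noetherian, so every subset is compact and saturated and `K(X)` is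
the poset of nonempty subsets under reverse inclusion.

Scott-open sets are upper-Vietoris open because every `K` is the directed supremum of its open
supersets (all compact), so a Scott-open set containing `K` contains `□V` for one of them.
Conversely, if `sup d ⊆ U` with `U` cofinite, each of the finitely many points `x ∉ U` is
excluded by some member of `d` (`{x}` is compact saturated, hence not an upper bound of `d`),
and directedness excludes them all at once.

The tails of an enumeration of a countable subset of `X` form a chain of nonempty sets with
empty intersection: it has no upper bound in `K(X)`, and with `U = ∅` it violates
well-filteredness.
-/

section CompactSaturated

variable {X : Type*} [TopologicalSpace X]

theorem IsOpen.isSat {U : Set X} (hU : IsOpen U) : IsSat U :=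
  subset_antisymm (subset_sInter fun _ hV => hV.2) (sInter_subset_of_mem ⟨hU, subset_rfl⟩)

theorem isSat_of_t1Space [T1Space X] (A : Set X) : IsSat A := by
  refine subset_antisymm (subset_sInter fun _ hU => hU.2) fun x hx => ?_
  by_contra hxA
  exact hx {x}ᶜ ⟨isOpen_compl_singleton, subset_compl_singleton_iff.2 hxA⟩ rfl

theorem nonempty_isCompact_isSat_iff [T1Space X] [NoetherianSpace X] {K : Set X} :
    K.Nonempty ∧ IsCompact K ∧ IsSat K ↔ K.Nonempty :=
  ⟨And.left, fun hK => ⟨hK, NoetherianSpace.isCompact K, isSat_of_t1Space K⟩⟩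

def KS.ofNonempty [T1Space X] [NoetherianSpace X] (K : Set X) (hK : K.Nonempty) : KS X :=
  ⟨K, nonempty_isCompact_isSat_iff.2 hK⟩

def KS.ofOpen [NoetherianSpace X] {U : Set X} (hU : IsOpen U) (hne : U.Nonempty) : KS X :=
  ⟨U, hne, NoetherianSpace.isCompact U, hU.isSat⟩

end CompactSaturated

section UpperVietorisEqScott

variable {X : Type*} [TopologicalSpace X]

theorem KS.exists_notMem_of_isLUB [T1Space X] {d : Set (KS X)} {a : KS X} (ha : IsLUB d a)
    {x : X} (hx : x ∉ a.1) : ∃ L ∈ d, x ∉ L.1 := by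
  by_contra! h
  let pt : KS X := ⟨{x}, singleton_nonempty x, isCompact_singleton, isSat_of_t1Space _⟩
  have hpt : pt ∈ upperBounds d := fun L hL => singleton_subset_iff.2 (h L hL)
  exact hx (ha.2 hpt rfl)

theorem KS.exists_disjoint_of_isLUB [T1Space X] {d : Set (KS X)} (hne : d.Nonempty)
    (hdir : DirectedOn (· ≤ ·) d) {a : KS X} (ha : IsLUB d a) {F : Set X} (hF : F.Finite)
    (hFa : Disjoint F a.1) : ∃ L ∈ d, Disjoint F L.1 := by
  induction F, hF using Set.Finite.induction_on with
  | empty => exact ⟨hne.some, hne.some_mem, empty_disjoint _⟩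
  | @insert x F _ _ ih =>
    rw [disjoint_insert_left] at hFa
    obtain ⟨L₁, hL₁, hFL₁⟩ := ih hFa.2
    obtain ⟨L₂, hL₂, hxL₂⟩ := exists_notMem_of_isLUB ha hFa.1
    obtain ⟨L, hL, hL₁L, hL₂L⟩ := hdir L₁ hL₁ L₂ hL₂
    exact ⟨L, hL, disjoint_insert_left.2 ⟨fun hx => hxL₂ (hL₂L hx), hFL₁.mono_right hL₁L⟩⟩

theorem KS.scottOpen_box [T1Space X] {U : Set X} (hU : U.Nonempty → Uᶜ.Finite) :
    ScottOpen {K : KS X | K.1 ⊆ U} := by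
  refine ⟨fun K L hKL hK => Subset.trans hKL hK, fun d hne hdir a ha haU => ?_⟩
  obtain ⟨L, hL, hUL⟩ := exists_disjoint_of_isLUB hne hdir ha (hU (a.2.1.mono haU))
    (disjoint_compl_left_iff_subset.2 haU)
  exact ⟨L, hL, disjoint_compl_left_iff_subset.1 hUL⟩

theorem scottTop_le_upperVietoris [T1Space X]
    (hX : ∀ U : Set X, IsOpen U → U.Nonempty → Uᶜ.Finite) :
    scottTop (KS X) ≤ upperVietoris X :=
  le_generateFrom fun _ ⟨U, hU, hS⟩ => hS ▸ KS.scottOpen_box (hX U hU)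

def KS.openSupersets (K : KS X) : Set (KS X) := {L | IsOpen L.1 ∧ K.1 ⊆ L.1}

theorem KS.openSupersets_nonempty [NoetherianSpace X] (K : KS X) : K.openSupersets.Nonempty :=
  ⟨KS.ofOpen isOpen_univ (K.2.1.mono (subset_univ _)), isOpen_univ, subset_univ _⟩

theorem KS.directedOn_openSupersets [NoetherianSpace X] (K : KS X) :
    DirectedOn (· ≤ ·) K.openSupersets := by
  rintro L₁ ⟨hL₁, hKL₁⟩ L₂ ⟨hL₂, hKL₂⟩
  have hKL := subset_inter hKL₁ hKL₂
  exact ⟨KS.ofOpen (hL₁.inter hL₂) (K.2.1.mono hKL), ⟨hL₁.inter hL₂, hKL⟩,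
    inter_subset_left, inter_subset_right⟩

theorem KS.isLUB_openSupersets [NoetherianSpace X] (K : KS X) :
    IsLUB K.openSupersets K := by
  refine ⟨fun L hL => hL.2, fun b hb => ?_⟩
  refine (subset_sInter ?_).trans K.2.2.2.ge
  rintro U ⟨hU, hKU⟩
  exact hb (show KS.ofOpen hU (K.2.1.mono hKU) ∈ _ from ⟨hU, hKU⟩)

theorem upperVietoris_le_scottTop [NoetherianSpace X] : upperVietoris X ≤ scottTop (KS X) := by
  rw [TopologicalSpace.le_def]
  rintro S ⟨hup, hS⟩
  refine (@isOpen_iff_forall_mem_open (KS X) (upperVietoris X) S).2 fun K hK => ?_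
  obtain ⟨L, ⟨hL, hKL⟩, hLS⟩ := hS _ K.openSupersets_nonempty K.directedOn_openSupersets K
    K.isLUB_openSupersets hK
  exact ⟨{M | M.1 ⊆ L.1}, fun M hM => hup hM hLS, isOpen_generateFrom_of_mem ⟨L.1, hL, rfl⟩, hKL⟩

end UpperVietorisEqScott

section Tails

variable {X : Type*} [TopologicalSpace X] [T1Space X] [NoetherianSpace X] [Infinite X]

def KS.tail (n : ℕ) : KS X :=
  KS.ofNonempty (Infinite.natEmbedding X '' Ici n) (nonempty_Ici.image _)

theorem KS.tail_monotone : Monotone (KS.tail (X := X)) :=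
  fun _ _ hmn => image_mono (Ici_subset_Ici.2 hmn)

theorem KS.exists_notMem_tail (x : X) : ∃ n, x ∉ (KS.tail n : KS X).1 := by
  by_contra! h
  obtain ⟨m, -, rfl⟩ := h 0
  obtain ⟨k, hk, hkm⟩ := h (m + 1)
  exact (Nat.succ_le_iff.1 hk).ne' ((Infinite.natEmbedding X).injective hkm)

theorem KS.not_bddAbove_range_tail : ¬ BddAbove (range (KS.tail (X := X))) := by
  rintro ⟨a, ha⟩
  obtain ⟨x, hx⟩ := a.2.1
  obtain ⟨n, hn⟩ := exists_notMem_tail x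
  exact hn (ha ⟨n, rfl⟩ hx)

theorem not_wellFiltered : ¬ WellFiltered X := by
  intro hwf
  obtain ⟨_, ⟨n, rfl⟩, hn⟩ := hwf (range fun n => (KS.tail n : KS X).1) (range_nonempty _)
    (forall_mem_range.2 fun n => (KS.tail n).2)
    (forall_mem_range.2 fun m => forall_mem_range.2 fun n =>
      ⟨_, mem_range_self (max m n), KS.tail_monotone (le_max_left m n),
        KS.tail_monotone (le_max_right m n)⟩)
    ∅ isOpen_empty
    (fun x hx => (KS.exists_notMem_tail x).elim fun n hn => hn (hx _ ⟨n, rfl⟩))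
  exact (KS.tail n).2.1.ne_empty (subset_empty_iff.1 hn)

end Tails

section Cofinite

variable {X : Type*} [TopologicalSpace X]

theorem t1Space_of_cofinite (hX : ∀ U : Set X, IsOpen U ↔ U = ∅ ∨ Uᶜ.Finite) : T1Space X :=
  ⟨fun x => isOpen_compl_iff.1 ((hX _).2 (Or.inr (by simp)))⟩

theorem noetherianSpace_of_cofinite (hX : ∀ U : Set X, IsOpen U ↔ U = ∅ ∨ Uᶜ.Finite) :
    NoetherianSpace X :=
  noetherianSpace_of_surjective (CofiniteTopology.of.symm : CofiniteTopology X → X)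
    (continuous_def.2 fun s hs => CofiniteTopology.isOpen_iff'.2 <| ((hX s).1 hs).imp
      (fun h : s = ∅ => h ▸ preimage_empty) (·.preimage CofiniteTopology.of.symm.injective.injOn))
    CofiniteTopology.of.symm.surjective

end Cofinite

theorem stmt8_general (X : Type) [Infinite X] [TopologicalSpace X]
    (hcof : ∀ U : Set X, IsOpen U ↔ U = ∅ ∨ Uᶜ.Finite) :
    (∀ K : Set X, (K.Nonempty ∧ IsCompact K ∧ IsSat K) ↔ K.Nonempty) ∧
    (scottTop (KS X) = upperVietoris X) ∧
    (¬ ∀ d : Set (KS X), d.Nonempty → DirectedOn (· ≤ ·) d → ∃ a : KS X, IsLUB d a) ∧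
    ¬ WellFiltered X := by
  have := t1Space_of_cofinite hcof
  have := noetherianSpace_of_cofinite hcof
  have hopen (U : Set X) (hU : IsOpen U) (hne : U.Nonempty) : Uᶜ.Finite :=
    ((hcof U).1 hU).resolve_left hne.ne_empty
  refine ⟨fun _ => nonempty_isCompact_isSat_iff,
    le_antisymm (scottTop_le_upperVietoris hopen) upperVietoris_le_scottTop, ?_, not_wellFiltered⟩
  intro hdcpo
  obtain ⟨a, ha⟩ := hdcpo _ (range_nonempty _) (directedOn_range.2 KS.tail_monotone.directed_le)
  exact KS.not_bddAbove_range_tail ⟨a, ha.1⟩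

/-- Let `X` be a countably infinite set with the cofinite topology.  Then:
(1) the nonempty compact saturated subsets of `X` are exactly the nonempty subsets;
(2) the Scott topology of the Smyth order on `K(X)` coincides with the upper Vietoris topology;
(3) `K(X)` with the Smyth order is not a dcpo, and `X` is not well-filtered. -/
theorem stmt8 (X : Type) [Countable X] [Infinite X] [TopologicalSpace X]
    (hcof : ∀ U : Set X, IsOpen U ↔ U = ∅ ∨ Uᶜ.Finite) :
    (∀ K : Set X, (K.Nonempty ∧ IsCompact K ∧ IsSat K) ↔ K.Nonempty) ∧
    (scottTop (KS X) = upperVietoris X) ∧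
    (¬ ∀ d : Set (KS X), d.Nonempty → DirectedOn (· ≤ ·) d → ∃ a : KS X, IsLUB d a) ∧
    ¬ WellFiltered X :=
  stmt8_general X hcof
end
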